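/- Let n ≥ 1. For each 1 ≤ i ≤ n let Γ_i be a ranked alphabet, and let Δ_0, Δ_1, …, Δ_n be ranked alphabets; let ψ_i be a linear tree homomorphism from Γ_i to Δ_{i−1} and φ_i a complete tree homomorphism from Γ_i to Δ_i, and let K_i ⊆ T_{Γ_i} be an arbitrary tree language. Let B_i = { (ψ̂_i(s), φ̂_i(s)) | s ∈ K_i } and let ℓ ∈ ℕ satisfy ℓ > height(ψ_i(γ)) for every 1 ≤ i ≤ n and every γ ∈ Γ_i. Then for every pair (t, u) in the composition B_1 ; ⋯ ; B_n: if SP^ℓ_{n+1}(t) ≠ ∅ then SP^ℓ_1(u) ≠ ∅. (In the paper the languages K_i are regular, but regularity is not needed.) -/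

import Mathlib

namespace Paper

/-- Trees over a ranked alphabet `(Γ, ar)` as a W-type. -/
abbrev Tree {Γ : Type} (ar : Γ → ℕ) : Type := WType (fun g : Γ => Fin (ar g))

variable {Γ : Type} {ar : Γ → ℕ}

/-- Root symbol of a tree. -/
def root : Tree ar → Γ
  | ⟨g, _⟩ => g

/-- `inPos t w` holds iff `w` is a position of `t`. -/
def inPos : Tree ar → List ℕ → Prop
  | _, [] => True
  | ⟨g, f⟩, i :: w => ∃ h : i < ar g, inPos (f ⟨i, h⟩) w

/-- The set of positions of a tree. -/
def pos (t : Tree ar) : Set (List ℕ) := {w | inPos t w}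

/-- Subtree of `t` at position `w` (junk value if `w` is not a position of `t`). -/
def subtree : Tree ar → List ℕ → Tree ar
  | t, [] => t
  | ⟨g, f⟩, i :: w => if h : i < ar g then subtree (f ⟨i, h⟩) w else ⟨g, f⟩

/-- Branching positions of `t` together with two distinct successor directions. -/
def branch (t : Tree ar) : Set (List ℕ × ℕ × ℕ) :=
  {p | p.1 ∈ pos t ∧ 2 ≤ ar (root (subtree t p.1)) ∧
       p.2.1 < ar (root (subtree t p.1)) ∧ p.2.2 < ar (root (subtree t p.1)) ∧ p.2.1 ≠ p.2.2}

/-- Branching positions of `t` along the path from `w` to `w ++ w''`. -/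
def branchPath (t : Tree ar) (w w'' : List ℕ) : Set (List ℕ) :=
  {v | ∃ w', w' <+: w'' ∧ v = w ++ w' ∧ ∃ i j, (w ++ w', i, j) ∈ branch t}

/-- First projections of a set of triples. -/
def SPof (S : Set (List ℕ × ℕ × ℕ)) : Set (List ℕ) := {w | ∃ i j, (w, i, j) ∈ S}

/-- The sets `SSP^ℓ_n(t)`. -/
def SSP (ℓ : ℕ) : ℕ → Tree ar → Set (List ℕ × ℕ × ℕ)
  | 0, t => branch t
  | n+1, t =>
      {p | p ∈ branch t ∧
        (∃ w₁ ∈ SPof (SSP ℓ n (subtree t (p.1 ++ [p.2.1]))),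
          ℓ ^ (n+1) ≤ (branchPath t (p.1 ++ [p.2.1]) w₁ ∩ SPof (SSP ℓ n t)).ncard) ∧
        (∃ w₂ ∈ SPof (SSP ℓ n (subtree t (p.1 ++ [p.2.2]))),
          ℓ ^ (n+1) ≤ (branchPath t (p.1 ++ [p.2.2]) w₂ ∩ SPof (SSP ℓ n t)).ncard)}

/-- The sets `SP^ℓ_n(t)`. -/
def SP (ℓ n : ℕ) (t : Tree ar) : Set (List ℕ) := SPof (SSP ℓ n t)

/-- Height of a tree: 0 for leaves, otherwise 1 + maximum height of the subtrees. -/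
def height : Tree ar → ℕ
  | ⟨_, f⟩ => Finset.univ.sup fun i => height (f i) + 1

/-- Arity function for the alphabet `Δ` extended with `k` nullary variables. -/
def extAr {Δ : Type} (arΔ : Δ → ℕ) (k : ℕ) : Δ ⊕ Fin k → ℕ := Sum.elim arΔ fun _ => 0

/-- Trees over `Δ` with variables `x_0, …, x_{k-1}`: the set `T_Δ(X_k)`. -/
abbrev TreeX {Δ : Type} (arΔ : Δ → ℕ) (k : ℕ) : Type := Tree (extAr arΔ k)

variable {Δ : Type} {arΔ : Δ → ℕ}

/-- Substitution `s[u 0, …, u (k-1)]` of trees for the variables. -/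
def subst {k : ℕ} (u : Fin k → Tree arΔ) : TreeX arΔ k → Tree arΔ
  | ⟨Sum.inl d, f⟩ => ⟨d, fun i => subst u (f i)⟩
  | ⟨Sum.inr i, _⟩ => u i

/-- The tree map `ĥ` induced by a tree homomorphism `h`. -/
def applyHom {arΓ : Γ → ℕ} (h : ∀ g : Γ, TreeX arΔ (arΓ g)) : Tree arΓ → Tree arΔ
  | ⟨g, f⟩ => subst (fun i => applyHom h (f i)) (h g)

/-- Number of occurrences of the variable `x_i` in a tree of `T_Δ(X_k)`. -/
def varCount {k : ℕ} (i : Fin k) : TreeX arΔ k → ℕ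
  | ⟨Sum.inl _, f⟩ => ∑ j, varCount i (f j)
  | ⟨Sum.inr j, _⟩ => if j = i then 1 else 0

/-- A tree homomorphism is linear if every variable occurs at most once in each image. -/
def Linear {arΓ : Γ → ℕ} (h : ∀ g : Γ, TreeX arΔ (arΓ g)) : Prop :=
  ∀ (g : Γ) (i : Fin (arΓ g)), varCount i (h g) ≤ 1

/-- A tree homomorphism is complete if every variable occurs at least once in each image. -/
def Complete {arΓ : Γ → ℕ} (h : ∀ g : Γ, TreeX arΔ (arΓ g)) : Prop :=
  ∀ (g : Γ) (i : Fin (arΓ g)), 1 ≤ varCount i (h g)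

/-!
Both `SP` conditions are local: `w ∈ SP ℓ k t` iff the subtree at `w` has a branching root and,
for `k > 0`, below each of the two chosen children a chain of `ℓ ^ k` nested `SP_{k-1}` positions.

Each relation `B_i` costs one level. Backwards through the linear `ψ`: an `SP_{k+1}` position of
`ψ̂ s` lies in the copy of `ψ g` created by a node of `s`; a copy has height below `ℓ`, so it
contains at most `ℓ - 1` branching nodes of any chain, and the two long chains below the position
leave it through two variables, distinct by linearity. Hence that node is an `SP_k` position of `s`, and
chains pull back losing at most a factor `ℓ - 1`, which the extra factor `ℓ` pays for. Forwards
through the complete `φ`: choosing one occurrence of every variable, a node of `s` branching to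
children `d ≠ e` goes to the fork of the occurrences of `x_d` and `x_e`, and chains of `SP_k`
positions go to chains of the same length. So `SP_{k+1}(ψ̂ s) ≠ ∅` gives `SP_k(φ̂ s) ≠ ∅`, and
`n` steps lead from `SP_{n+1}(t)` to `SP_1(u)`.
-/

open Finset

section Positions

lemma inPos_nil (t : Tree ar) : inPos t [] := by
  cases t; trivial

@[simp] lemma subtree_nil (t : Tree ar) : subtree t [] = t := by
  cases t; rfl

lemma subtree_cons {g : Γ} {f : Fin (ar g) → Tree ar} {i : ℕ} {w : List ℕ} (h : i < ar g) :
    subtree ⟨g, f⟩ (i :: w) = subtree (f ⟨i, h⟩) w := by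
  simp [subtree, h]

lemma inPos_cons_fin {g : Γ} {f : Fin (ar g) → Tree ar} (i : Fin (ar g)) {w : List ℕ} :
    inPos ⟨g, f⟩ ((i : ℕ) :: w) ↔ inPos (f i) w :=
  ⟨fun ⟨_, h⟩ => h, fun h => ⟨i.isLt, h⟩⟩

lemma subtree_cons_fin {g : Γ} {f : Fin (ar g) → Tree ar} (i : Fin (ar g)) (w : List ℕ) :
    subtree ⟨g, f⟩ ((i : ℕ) :: w) = subtree (f i) w := by
  simp [subtree_cons i.isLt]

lemma subtree_singleton {g : Γ} {f : Fin (ar g) → Tree ar} (i : Fin (ar g)) :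
    subtree ⟨g, f⟩ [(i : ℕ)] = f i := by
  simp [subtree_cons i.isLt]

lemma inPos_singleton {t : Tree ar} {i : ℕ} : inPos t [i] ↔ i < ar (root t) := by
  cases t
  exact ⟨fun ⟨h, _⟩ => h, fun h => ⟨h, inPos_nil _⟩⟩

lemma inPos_append {t : Tree ar} {w v : List ℕ} :
    inPos t (w ++ v) ↔ inPos t w ∧ inPos (subtree t w) v := by
  induction w generalizing t with
  | nil => simp [inPos_nil]
  | cons i w ih =>
    obtain ⟨g, f⟩ := t
    constructor
    · rintro ⟨hi, hw⟩
      rw [subtree_cons hi]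
      exact ⟨⟨hi, (ih.1 hw).1⟩, (ih.1 hw).2⟩
    · rintro ⟨⟨hi, hw⟩, hv⟩
      rw [subtree_cons hi] at hv
      exact ⟨hi, ih.2 ⟨hw, hv⟩⟩

lemma inPos_of_prefix {t : Tree ar} {w v : List ℕ} (hp : w <+: v) (h : inPos t v) :
    inPos t w := by
  obtain ⟨e, rfl⟩ := hp
  exact (inPos_append.1 h).1

lemma subtree_append {t : Tree ar} {w : List ℕ} (h : inPos t w) (v : List ℕ) :
    subtree t (w ++ v) = subtree (subtree t w) v := by
  induction w generalizing t with
  | nil => simp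
  | cons i w ih =>
    obtain ⟨g, f⟩ := t
    obtain ⟨hi, hw⟩ := h
    rw [List.cons_append, subtree_cons hi, subtree_cons hi, ih hw]

lemma length_add_height_le {t : Tree ar} {w : List ℕ} (h : inPos t w) :
    w.length + height (subtree t w) ≤ height t := by
  induction w generalizing t with
  | nil => simp
  | cons i w ih =>
    obtain ⟨g, f⟩ := t
    obtain ⟨hi, hw⟩ := h
    have hchild : height (f ⟨i, hi⟩) + 1 ≤ height (⟨g, f⟩ : Tree ar) :=
      Finset.le_sup (f := fun i => height (f i) + 1) (mem_univ _)
    rw [subtree_cons hi, List.length_cons]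
    have := ih hw
    omega

lemma height_subtree_le {t : Tree ar} {w : List ℕ} (h : inPos t w) :
    height (subtree t w) ≤ height t :=
  (Nat.le_add_left _ _).trans (length_add_height_le h)

lemma length_lt_height {t : Tree ar} {w : List ℕ} (h : inPos t w)
    (har : 1 ≤ ar (root (subtree t w))) : w.length < height t := by
  have hpos : 1 ≤ height (subtree t w) := by
    generalize subtree t w = s at har
    obtain ⟨g, f⟩ := s
    exact le_trans (Nat.le_add_left _ _)
      (Finset.le_sup (f := fun i => height (f i) + 1) (mem_univ ⟨0, har⟩))
  have := length_add_height_le h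
  omega

end Positions

section PrefixChains

variable {α : Type*}

lemma IsChain.eq_of_length_eq {C : Set (List α)} (hC : IsChain (· <+: ·) C) {v w : List α}
    (hv : v ∈ C) (hw : w ∈ C) (h : v.length = w.length) : v = w :=
  (hC.total hv hw).elim (·.eq_of_length h) fun h' => (h'.eq_of_length h.symm).symm

lemma card_le_of_isChain_of_length_lt {C : Finset (List α)}
    (hC : IsChain (· <+: ·) (C : Set (List α))) {N : ℕ} (hN : ∀ v ∈ C, v.length < N) :
    #C ≤ N := by
  simpa using card_le_card_of_injOn List.length (t := range N)
    (fun v hv => by simpa using hN v hv) fun v hv w hw h => IsChain.eq_of_length_eq hC hv hw h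

lemma IsChain.exists_top {C : Finset (List α)} (hC : IsChain (· <+: ·) (C : Set (List α)))
    (hne : C.Nonempty) : ∃ z ∈ C, ∀ v ∈ C, v <+: z := by
  obtain ⟨z, hz, hmax⟩ := C.exists_max_image List.length hne
  refine ⟨z, hz, fun v hv => (hC.total hv hz).elim id fun h => ?_⟩
  rw [h.eq_of_length (le_antisymm h.length_le (hmax v hv))]

lemma IsChain.image_append {C : Set (List α)} (hC : IsChain (· <+: ·) C) (x : List α) :
    IsChain (· <+: ·) ((x ++ ·) '' C) :=
  hC.image_of_map_rel _ _ _ fun _ _ h => (List.prefix_append_right_inj x).2 h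

/-- The right-hand side is the shape of the chain condition in `SSP`, with `z = w ++ w₁`. -/
lemma exists_isChain_iff {S : Set (List α)} {x : List α} {m : ℕ} :
    (∃ C : Finset (List α), C.Nonempty ∧ m ≤ #C ∧ IsChain (· <+: ·) (C : Set (List α)) ∧
      ∀ v ∈ C, x <+: v ∧ v ∈ S) ↔
    ∃ z ∈ S, x <+: z ∧ m ≤ {v | x <+: v ∧ v <+: z ∧ v ∈ S}.ncard := by
  have hfin : ∀ z : List α, {v | x <+: v ∧ v <+: z ∧ v ∈ S}.Finite := fun z =>
    z.inits.finite_toSet.subset fun v hv => by simpa using hv.2.1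
  constructor
  · rintro ⟨C, hne, hm, hC, hCS⟩
    obtain ⟨z, hz, htop⟩ := IsChain.exists_top hC hne
    refine ⟨z, (hCS z hz).2, (hCS z hz).1, hm.trans ?_⟩
    rw [← Set.ncard_coe_finset]
    exact Set.ncard_le_ncard (fun v hv => ⟨(hCS v hv).1, htop v hv, (hCS v hv).2⟩) (hfin z)
  · rintro ⟨z, hzS, hxz, hm⟩
    refine ⟨(hfin z).toFinset, ⟨z, by simpa using ⟨hxz, hzS⟩⟩,
      by simpa [Set.ncard_eq_toFinset_card _ (hfin z)] using hm, ?_, fun v hv => ?_⟩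
    · intro v hv w hw _
      simp only [Set.Finite.coe_toFinset, Set.mem_ofPred_eq] at hv hw
      exact List.prefix_or_prefix_of_prefix hv.2.1 hw.2.1
    · simp only [Set.Finite.mem_toFinset, Set.mem_ofPred_eq] at hv
      exact ⟨hv.1, hv.2.2⟩

lemma exists_fork_of_not_prefix :
    ∀ {p q : List α}, ¬ p <+: q → ¬ q <+: p →
      ∃ (c : List α) (a b : α), a ≠ b ∧ c ++ [a] <+: p ∧ c ++ [b] <+: q
  | [], _, h, _ | _, [], _, h => absurd List.nil_prefix h
  | x :: p, y :: q, h₁, h₂ => by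
    by_cases hxy : x = y
    · subst hxy
      obtain ⟨c, a, b, hab, ha, hb⟩ := exists_fork_of_not_prefix
        (mt (List.prefix_cons_inj x).2 h₁) (mt (List.prefix_cons_inj x).2 h₂)
      exact ⟨x :: c, a, b, hab, (List.prefix_cons_inj x).2 ha, (List.prefix_cons_inj x).2 hb⟩
    · exact ⟨[], x, y, hxy, by simp, by simp⟩

lemma isChain_image_and_injOn {β : Type*} {C : Set (List α)} (hch : IsChain (· <+: ·) C)
    {F : List α → List β}
    (hF : ∀ p ∈ C, ∀ q ∈ C, p <+: q → p ≠ q → F p <+: F q ∧ F p ≠ F q) :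
    IsChain (· <+: ·) (F '' C) ∧ Set.InjOn F C := by
  refine ⟨?_, fun p hp q hq hpq => by_contra fun hne => ?_⟩
  · rintro _ ⟨p, hp, rfl⟩ _ ⟨q, hq, rfl⟩ hne
    have hpq : p ≠ q := fun h => hne (congrArg F h)
    exact (IsChain.total hch hp hq).imp (hF p hp q hq · hpq |>.1)
      (hF q hq p hp · hpq.symm |>.1)
  · rcases IsChain.total hch hp hq with h | h
    · exact (hF p hp q hq h hne).2 hpq
    · exact (hF q hq p hp h (Ne.symm hne)).2 hpq.symm

lemma strictMono_of_branch_toward_top {β : Type*} {C : Set (List α)} {z : List α}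
    (htop : ∀ p ∈ C, p <+: z) {F G : List α → List β}
    (hG : ∀ {p q}, q <+: z → p <+: q → G p <+: G q) (hGF : ∀ p ∈ C, G p <+: F p)
    (hF : ∀ p ∈ C, p ≠ z → ∃ d a, p ++ [d] <+: z ∧ F p ++ [a] <+: G (p ++ [d])) :
    ∀ p ∈ C, ∀ q ∈ C, p <+: q → p ≠ q → F p <+: F q ∧ F p ≠ F q := by
  intro p hp q hq hpq hne
  have hlen : p.length < q.length :=
    lt_of_le_of_ne hpq.length_le fun h => hne (hpq.eq_of_length h)
  obtain ⟨d, a, hpd, hFp⟩ := hF p hp fun hpz => by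
    subst hpz
    have := (htop q hq).length_le
    omega
  have hpdq : p ++ [d] <+: q := List.prefix_of_prefix_length_le hpd (htop q hq) (by simpa)
  have hlt : F p ++ [a] <+: F q := hFp.trans ((hG (htop q hq) hpdq).trans (hGF q hq))
  refine ⟨(List.prefix_append _ _).trans hlt, fun h => ?_⟩
  have := hlt.length_le
  simp [h] at this

end PrefixChains

section SPCharacterization

def HasChainFrom (P : Tree ar → Prop) (m : ℕ) (t : Tree ar) (y : List ℕ) : Prop :=
  ∃ C : Finset (List ℕ), C.Nonempty ∧ m ≤ #C ∧ IsChain (· <+: ·) (C : Set (List ℕ)) ∧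
    ∀ v ∈ C, y <+: v ∧ inPos t v ∧ P (subtree t v)

variable {P Q : Tree ar → Prop} {m m' : ℕ} {t : Tree ar} {x y y' : List ℕ}

lemma HasChainFrom.mono (h : HasChainFrom P m t y) (hPQ : ∀ u, P u → Q u) (hm : m' ≤ m)
    (hy : y' <+: y) : HasChainFrom Q m' t y' := by
  obtain ⟨C, hne, hC, hch, hmem⟩ := h
  exact ⟨C, hne, hm.trans hC, hch, fun v hv =>
    ⟨hy.trans (hmem v hv).1, (hmem v hv).2.1, hPQ _ (hmem v hv).2.2⟩⟩

lemma hasChainFrom_subtree_iff (hx : inPos t x) :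
    HasChainFrom P m (subtree t x) y ↔ HasChainFrom P m t (x ++ y) := by
  classical
  constructor
  · rintro ⟨C, hne, hm, hch, hmem⟩
    refine ⟨C.image (x ++ ·), hne.image _, ?_, ?_, ?_⟩
    · rwa [card_image_of_injective _ fun _ _ h => List.append_cancel_left h]
    · rw [coe_image]
      exact IsChain.image_append hch x
    · simp only [mem_image, forall_exists_index, and_imp]
      rintro _ v hv rfl
      obtain ⟨h1, h2, h3⟩ := hmem v hv
      exact ⟨(List.prefix_append_right_inj x).2 h1, inPos_append.2 ⟨hx, h2⟩,
        by rwa [subtree_append hx]⟩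
  · rintro ⟨C, hne, hm, hch, hmem⟩
    have hx' : ∀ v ∈ C, x ++ v.drop x.length = v := fun v hv =>
      List.prefix_iff_eq_append.1 ((List.prefix_append x y).trans (hmem v hv).1)
    refine ⟨C.image (List.drop x.length), hne.image _, ?_, ?_, ?_⟩
    · have hinj : Set.InjOn (List.drop x.length) (C : Set (List ℕ)) := fun v hv w hw h => by
        rw [← hx' v hv, ← hx' w hw, h]
      rwa [card_image_of_injOn hinj]
    · rw [coe_image]
      exact hch.image_of_map_rel _ _ _ fun v w h => h.drop _
    · simp only [mem_image, forall_exists_index, and_imp]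
      rintro _ v hv rfl
      obtain ⟨h1, h2, h3⟩ := hmem v hv
      rw [← hx' v hv] at h1 h2 h3
      exact ⟨(List.prefix_append_right_inj x).1 h1, (inPos_append.1 h2).2,
        by rwa [subtree_append hx] at h3⟩

def IsBranching (t : Tree ar) (i j : ℕ) : Prop :=
  2 ≤ ar (root t) ∧ i < ar (root t) ∧ j < ar (root t) ∧ i ≠ j

/-- `HasSPChain ℓ k t y` is the chain condition that `SSP^ℓ_k` imposes below `y` (vacuous for
`k = 0`); `IsSSPRoot ℓ k t i j` says `([], i, j) ∈ SSP ℓ k t` (see `mem_SSP_iff`). -/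
def HasSPChain (ℓ : ℕ) : ℕ → Tree ar → List ℕ → Prop
  | 0, _, _ => True
  | k + 1, t, y => HasChainFrom
      (fun u => ∃ i j, IsBranching u i j ∧ HasSPChain ℓ k u [i] ∧ HasSPChain ℓ k u [j])
      (ℓ ^ (k + 1)) t y

def IsSSPRoot (ℓ k : ℕ) (t : Tree ar) (i j : ℕ) : Prop :=
  IsBranching t i j ∧ HasSPChain ℓ k t [i] ∧ HasSPChain ℓ k t [j]

def IsSPRoot (ℓ k : ℕ) (t : Tree ar) : Prop := ∃ i j, IsSSPRoot ℓ k t i j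

variable {ℓ k : ℕ}

lemma IsSPRoot.two_le_ar (h : IsSPRoot ℓ k t) : 2 ≤ ar (root t) := by
  obtain ⟨i, j, hb, -⟩ := h
  exact hb.1

lemma isBranching_mk {g : Γ} {f : Fin (ar g) → Tree ar} {c d : Fin (ar g)} (h : c ≠ d) :
    IsBranching ⟨g, f⟩ c d := by
  have := Fin.val_ne_of_ne h
  exact ⟨by have := c.isLt; have := d.isLt; change 2 ≤ ar g; omega, c.isLt, d.isLt, this⟩

lemma HasSPChain.of_prefix (h : HasSPChain ℓ k t y) (hy : y' <+: y) : HasSPChain ℓ k t y' := by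
  cases k with
  | zero => trivial
  | succ k => exact HasChainFrom.mono h (fun _ => id) le_rfl hy

lemma hasSPChain_subtree_iff (hx : inPos t x) :
    HasSPChain ℓ k (subtree t x) y ↔ HasSPChain ℓ k t (x ++ y) := by
  cases k with
  | zero => exact Iff.rfl
  | succ k => exact hasChainFrom_subtree_iff hx

lemma hasSPChain_of_isSPRoot (hx : inPos t x) (h : IsSPRoot ℓ k (subtree t x)) :
    HasSPChain ℓ k t x := by
  obtain ⟨i, -, -, hi, -⟩ := h
  exact ((hasSPChain_subtree_iff hx).1 hi).of_prefix (List.prefix_append x [i])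

lemma SSP_subset_branch : SSP ℓ k t ⊆ branch t := by
  cases k with
  | zero => exact subset_rfl
  | succ k => exact fun _ hp => hp.1

lemma branchPath_inter_SP (w₁ : List ℕ) :
    branchPath t x w₁ ∩ SP ℓ k t = {v | x <+: v ∧ v <+: x ++ w₁ ∧ v ∈ SP ℓ k t} := by
  ext v
  constructor
  · rintro ⟨⟨w', hw', rfl, -⟩, hv⟩
    exact ⟨List.prefix_append x w', (List.prefix_append_right_inj x).2 hw', hv⟩
  · rintro ⟨⟨w', rfl⟩, hw', ⟨i, j, hv⟩⟩
    exact ⟨⟨w', (List.prefix_append_right_inj x).1 hw', rfl, i, j, SSP_subset_branch hv⟩, i, j, hv⟩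

lemma exists_branchPath_iff_hasChainFrom
    (hSP : ∀ (t : Tree ar) v, v ∈ SP ℓ k t ↔ inPos t v ∧ IsSPRoot ℓ k (subtree t v))
    (hx : inPos t x) :
    (∃ w₁ ∈ SP ℓ k (subtree t x), m ≤ (branchPath t x w₁ ∩ SP ℓ k t).ncard) ↔
      HasChainFrom (IsSPRoot ℓ k) m t x := by
  have hchain : HasChainFrom (IsSPRoot ℓ k) m t x ↔ ∃ C : Finset (List ℕ), C.Nonempty ∧
      m ≤ #C ∧ IsChain (· <+: ·) (C : Set (List ℕ)) ∧ ∀ v ∈ C, x <+: v ∧ v ∈ SP ℓ k t := by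
    simp only [HasChainFrom, hSP]
  rw [hchain, exists_isChain_iff]
  have hmem : ∀ w₁, w₁ ∈ SP ℓ k (subtree t x) ↔ x ++ w₁ ∈ SP ℓ k t := fun w₁ => by
    rw [hSP, hSP, inPos_append, subtree_append hx, and_assoc, and_iff_right hx]
  simp only [branchPath_inter_SP]
  constructor
  · rintro ⟨w₁, hw₁, hm⟩
    exact ⟨x ++ w₁, (hmem w₁).1 hw₁, List.prefix_append x w₁, hm⟩
  · rintro ⟨z, hz, ⟨w₁, rfl⟩, hm⟩
    exact ⟨w₁, (hmem w₁).2 hz, hm⟩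

lemma mem_SP_iff_of_mem_SSP_iff
    (h : ∀ w i j, (w, i, j) ∈ SSP ℓ k t ↔ inPos t w ∧ IsSSPRoot ℓ k (subtree t w) i j)
    (w : List ℕ) : w ∈ SP ℓ k t ↔ inPos t w ∧ IsSPRoot ℓ k (subtree t w) := by
  simp only [SP, SPof, Set.mem_ofPred_eq, h, IsSPRoot]
  exact ⟨fun ⟨i, j, h1, h2⟩ => ⟨h1, i, j, h2⟩, fun ⟨h1, i, j, h2⟩ => ⟨i, j, h1, h2⟩⟩

lemma mem_SSP_iff {w : List ℕ} {i j : ℕ} :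
    (w, i, j) ∈ SSP ℓ k t ↔ inPos t w ∧ IsSSPRoot ℓ k (subtree t w) i j := by
  induction k generalizing t w i j with
  | zero => exact ⟨fun ⟨h1, h2⟩ => ⟨h1, h2, trivial, trivial⟩, fun ⟨h1, h2, _⟩ => ⟨h1, h2⟩⟩
  | succ k ih =>
    have hSP : ∀ (t : Tree ar) v, v ∈ SP ℓ k t ↔ inPos t v ∧ IsSPRoot ℓ k (subtree t v) :=
      fun t => mem_SP_iff_of_mem_SSP_iff fun _ _ _ => ih
    have hdir : ∀ a, inPos t w → a < ar (root (subtree t w)) →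
        ((∃ w₁ ∈ SP ℓ k (subtree t (w ++ [a])),
          ℓ ^ (k + 1) ≤ (branchPath t (w ++ [a]) w₁ ∩ SP ℓ k t).ncard) ↔
        HasSPChain ℓ (k + 1) (subtree t w) [a]) := fun a hw ha => by
      have hwa : inPos t (w ++ [a]) := inPos_append.2 ⟨hw, inPos_singleton.2 ha⟩
      rw [exists_branchPath_iff_hasChainFrom hSP hwa, hasSPChain_subtree_iff hw]
      rfl
    constructor
    · rintro ⟨hb, hi, hj⟩
      exact ⟨hb.1, hb.2, (hdir i hb.1 hb.2.2.1).1 hi, (hdir j hb.1 hb.2.2.2.1).1 hj⟩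
    · rintro ⟨hw, hb, hi, hj⟩
      exact ⟨⟨hw, hb⟩, (hdir i hw hb.2.1).2 hi, (hdir j hw hb.2.2.1).2 hj⟩

lemma mem_SP_iff {w : List ℕ} : w ∈ SP ℓ k t ↔ inPos t w ∧ IsSPRoot ℓ k (subtree t w) :=
  mem_SP_iff_of_mem_SSP_iff (fun _ _ _ => mem_SSP_iff) w

end SPCharacterization

section Variables

variable {r : ℕ}

def IsVarPos (h : TreeX arΔ r) (q : List ℕ) (c : Fin r) : Prop :=
  inPos h q ∧ root (subtree h q) = Sum.inr c

lemma not_inPos_var_cons {c : Fin r} {f : Fin 0 → TreeX arΔ r} {i : ℕ} {w : List ℕ} :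
    ¬ inPos (⟨Sum.inr c, f⟩ : TreeX arΔ r) (i :: w) :=
  fun ⟨hi, _⟩ => Nat.not_lt_zero _ hi

lemma IsVarPos.eq_nil_of_inPos_append {h : TreeX arΔ r} {q e : List ℕ} {c : Fin r}
    (hq : IsVarPos h q c) (he : inPos h (q ++ e)) : e = [] := by
  have he' := (inPos_append.1 he).2
  obtain ⟨-, hroot⟩ := hq
  generalize subtree h q = s at hroot he'
  obtain ⟨x, f⟩ := s
  cases hroot
  cases e with
  | nil => rfl
  | cons i e => exact absurd he' not_inPos_var_cons

lemma IsVarPos.eq_of_prefix_of_prefix {h : TreeX arΔ r} {q q' z : List ℕ} {c c' : Fin r}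
    (hq : IsVarPos h q c) (hq' : IsVarPos h q' c') (hz : q <+: z) (hz' : q' <+: z) :
    q = q' ∧ c = c' := by
  have key : ∀ {q q' : List ℕ} {c c' : Fin r}, IsVarPos h q c → IsVarPos h q' c' → q <+: q' →
      q = q' ∧ c = c' := by
    rintro q _ c c' hq hq' ⟨e, rfl⟩
    obtain rfl := hq.eq_nil_of_inPos_append hq'.1
    rw [List.append_nil] at hq' ⊢
    exact ⟨rfl, Sum.inr_injective (hq.2.symm.trans hq'.2)⟩
  rcases List.prefix_or_prefix_of_prefix hz hz' with h | h
  · exact key hq hq' h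
  · exact (key hq' hq h).imp Eq.symm Eq.symm

lemma exists_fork_of_isVarPos {h : TreeX arΔ r} {qd qe : List ℕ} {d e : Fin r}
    (hd : IsVarPos h qd d) (he : IsVarPos h qe e) (hde : d ≠ e) :
    ∃ (c : List ℕ) (a b : ℕ) (δ : Δ), a ≠ b ∧ c ++ [a] <+: qd ∧ c ++ [b] <+: qe ∧
      inPos h c ∧ root (subtree h c) = Sum.inl δ ∧ a < arΔ δ ∧ b < arΔ δ := by
  have hne : ∀ {q q' : List ℕ} {c c' : Fin r}, IsVarPos h q c → IsVarPos h q' c' → c ≠ c' →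
      ¬ q <+: q' := fun hq hq' hcc' hp =>
    hcc' (hq.eq_of_prefix_of_prefix hq' hp (List.prefix_refl _)).2
  obtain ⟨c, a, b, hab, ha, hb⟩ := exists_fork_of_not_prefix (hne hd he hde)
    (hne he hd hde.symm)
  have hca : inPos h (c ++ [a]) := inPos_of_prefix ha hd.1
  have hcb : inPos h (c ++ [b]) := inPos_of_prefix hb he.1
  obtain ⟨hc, hac⟩ := inPos_append.1 hca
  have hbc := (inPos_append.1 hcb).2
  generalize hs : subtree h c = s at hac hbc
  obtain ⟨δ | x, f⟩ := s
  · exact ⟨c, a, b, δ, hab, ha, hb, hc, hs ▸ rfl, inPos_singleton.1 hac,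
      inPos_singleton.1 hbc⟩
  · exact absurd hac not_inPos_var_cons

lemma varCount_child_le {δ : Δ} {f : Fin (arΔ δ) → TreeX arΔ r} (c : Fin r) (j : Fin (arΔ δ)) :
    varCount c (f j) ≤ varCount c (⟨Sum.inl δ, f⟩ : TreeX arΔ r) :=
  single_le_sum (f := fun j => varCount c (f j)) (fun _ _ => Nat.zero_le _) (mem_univ j)

lemma varCount_subtree_le {h : TreeX arΔ r} {q : List ℕ} (hq : inPos h q) (c : Fin r) :
    varCount c (subtree h q) ≤ varCount c h := by
  induction q generalizing h with
  | nil => simp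
  | cons i q ih =>
    obtain ⟨δ | x, f⟩ := h
    · obtain ⟨hi, hq⟩ := hq
      rw [subtree_cons hi]
      exact (ih hq).trans (varCount_child_le c _)
    · exact absurd hq not_inPos_var_cons

lemma IsVarPos.one_le_varCount {h : TreeX arΔ r} {q : List ℕ} {c : Fin r}
    (hq : IsVarPos h q c) : 1 ≤ varCount c h := by
  refine le_trans ?_ (varCount_subtree_le hq.1 c)
  obtain ⟨-, hroot⟩ := hq
  generalize subtree h q = s at hroot ⊢
  obtain ⟨x, f⟩ := s
  cases hroot
  simp [varCount]

lemma IsVarPos.eq_of_varCount_le_one {h : TreeX arΔ r} {q q' : List ℕ} {c : Fin r}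
    (hlin : varCount c h ≤ 1) (hq : IsVarPos h q c) (hq' : IsVarPos h q' c) : q = q' := by
  induction q generalizing h q' with
  | nil =>
    cases q' with
    | nil => rfl
    | cons i q' =>
      exact absurd (hq.eq_nil_of_inPos_append (e := i :: q') (by simpa using hq'.1))
        (List.cons_ne_nil _ _)
  | cons i q ih =>
    obtain ⟨δ | x, f⟩ := h
    · obtain ⟨⟨hi, hq⟩, hroot⟩ := hq
      rw [subtree_cons hi] at hroot
      cases q' with
      | nil => cases hq'.2
      | cons i' q' =>
        obtain ⟨⟨hi', hq'⟩, hroot'⟩ := hq'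
        rw [subtree_cons hi'] at hroot'
        by_cases hii : i = i'
        · subst hii
          rw [ih ((varCount_child_le c _).trans hlin) ⟨hq, hroot⟩ ⟨hq', hroot'⟩]
        · have hne : (⟨i, hi⟩ : Fin (extAr arΔ r (Sum.inl δ))) ≠ ⟨i', hi'⟩ :=
            fun h => hii (congrArg Fin.val h)
          have h2 : varCount c (f ⟨i, hi⟩) + varCount c (f ⟨i', hi'⟩) ≤ 1 := by
            rw [← sum_pair (f := fun j => varCount c (f j)) hne]
            exact (sum_le_sum_of_subset (subset_univ _)).trans hlin
          have := IsVarPos.one_le_varCount ⟨hq, hroot⟩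
          have := IsVarPos.one_le_varCount ⟨hq', hroot'⟩
          omega
    · exact absurd hq.1 not_inPos_var_cons

lemma exists_isVarPos_of_one_le_varCount {h : TreeX arΔ r} {c : Fin r}
    (h1 : 1 ≤ varCount c h) : ∃ q, IsVarPos h q c := by
  induction h with
  | mk x f ih =>
    obtain δ | c' := x
    · obtain ⟨j, -, hj⟩ := exists_ne_zero_of_sum_ne_zero (s := univ)
        (f := fun j => varCount c (f j)) (by simp only [varCount] at h1; omega)
      obtain ⟨q, hq, hroot⟩ := ih j (Nat.one_le_iff_ne_zero.2 hj)
      refine ⟨(j : ℕ) :: q, ⟨⟨j.isLt, hq⟩, ?_⟩⟩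
      rw [subtree_cons j.isLt]
      exact hroot
    · by_cases hc : c' = c
      · exact ⟨[], inPos_nil _, by rw [subtree_nil, hc]; rfl⟩
      · simp [varCount, hc] at h1

end Variables

section Substitution

variable {r : ℕ} {u : Fin r → Tree arΔ}

lemma root_subst_of_root_eq_inl {h : TreeX arΔ r} {δ : Δ} (hr : root h = Sum.inl δ) :
    root (subst u h) = δ := by
  obtain ⟨δ' | c, f⟩ := h <;> cases hr
  rfl

lemma subst_of_root_eq_inr {h : TreeX arΔ r} {c : Fin r} (hr : root h = Sum.inr c) :
    subst u h = u c := by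
  obtain ⟨δ | c', f⟩ := h <;> cases hr
  rfl

lemma inPos_subst {h : TreeX arΔ r} {q : List ℕ} (hq : inPos h q) : inPos (subst u h) q := by
  induction q generalizing h with
  | nil => exact inPos_nil _
  | cons i q ih =>
    obtain ⟨δ | c, f⟩ := h
    · exact ⟨hq.1, ih hq.2⟩
    · exact absurd hq not_inPos_var_cons

lemma subtree_subst {h : TreeX arΔ r} {q : List ℕ} (hq : inPos h q) :
    subtree (subst u h) q = subst u (subtree h q) := by
  induction q generalizing h with
  | nil => simp
  | cons i q ih =>
    obtain ⟨δ | c, f⟩ := h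
    · obtain ⟨hi, hq⟩ := hq
      rw [subtree_cons hi, ← ih hq]
      exact subtree_cons (f := fun j => subst u (f j)) hi
    · exact absurd hq not_inPos_var_cons

lemma IsVarPos.inPos_subst_append_iff {h : TreeX arΔ r} {q : List ℕ} {c : Fin r}
    (hq : IsVarPos h q c) {v : List ℕ} : inPos (subst u h) (q ++ v) ↔ inPos (u c) v := by
  rw [inPos_append, subtree_subst hq.1, subst_of_root_eq_inr hq.2]
  exact and_iff_right (inPos_subst hq.1)

lemma IsVarPos.subtree_subst_append {h : TreeX arΔ r} {q : List ℕ} {c : Fin r}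
    (hq : IsVarPos h q c) (v : List ℕ) : subtree (subst u h) (q ++ v) = subtree (u c) v := by
  rw [subtree_append (inPos_subst hq.1), subtree_subst hq.1, subst_of_root_eq_inr hq.2]

def firstVar : TreeX arΔ r → List ℕ → Option (Fin r × List ℕ)
  | ⟨Sum.inr c, _⟩, v => some (c, v)
  | ⟨Sum.inl _, _⟩, [] => none
  | ⟨Sum.inl δ, f⟩, i :: v => if h : i < arΔ δ then firstVar (f ⟨i, h⟩) v else none

lemma firstVar_eq_none {h : TreeX arΔ r} {v : List ℕ} (hv : inPos (subst u h) v)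
    (hn : firstVar h v = none) : inPos h v ∧ ∃ δ, root (subtree h v) = Sum.inl δ := by
  induction v generalizing h with
  | nil =>
    obtain ⟨δ | c, f⟩ := h
    · exact ⟨inPos_nil _, δ, rfl⟩
    · cases hn
  | cons i v ih =>
    obtain ⟨δ | c, f⟩ := h
    · obtain ⟨hi, hv⟩ := hv
      rw [firstVar, dif_pos hi] at hn
      rw [subtree_cons (show i < extAr arΔ r (Sum.inl δ) from hi)]
      exact ⟨⟨hi, (ih hv hn).1⟩, (ih hv hn).2⟩
    · cases hn

lemma firstVar_eq_some {h : TreeX arΔ r} {v v' : List ℕ} {c : Fin r}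
    (hs : firstVar h v = some (c, v')) : ∃ q, IsVarPos h q c ∧ v = q ++ v' := by
  induction v generalizing h with
  | nil =>
    obtain ⟨δ | c', f⟩ := h
    · cases hs
    · cases hs
      exact ⟨[], ⟨inPos_nil _, rfl⟩, rfl⟩
  | cons i v ih =>
    obtain ⟨δ | c', f⟩ := h
    · rw [firstVar] at hs
      split_ifs at hs with hi
      obtain ⟨q, ⟨hq, hroot⟩, rfl⟩ := ih hs
      exact ⟨i :: q, ⟨⟨hi, hq⟩, by rwa [subtree_cons (show i < extAr arΔ r (Sum.inl δ) from hi)]⟩,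
        rfl⟩
    · cases hs
      exact ⟨[], ⟨inPos_nil _, rfl⟩, rfl⟩

lemma firstVar_append {h : TreeX arΔ r} {v v' : List ℕ} {c : Fin r}
    (hs : firstVar h v = some (c, v')) (e : List ℕ) :
    firstVar h (v ++ e) = some (c, v' ++ e) := by
  induction v generalizing h with
  | nil =>
    obtain ⟨δ | c', f⟩ := h
    · cases hs
    · cases hs
      rfl
  | cons i v ih =>
    obtain ⟨δ | c', f⟩ := h
    · rw [firstVar] at hs
      split_ifs at hs with hi
      rw [List.cons_append, firstVar, dif_pos hi, ih hs]
    · cases hs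
      rfl

end Substitution

section Homomorphisms

variable {H : ∀ g : Γ, TreeX arΔ (ar g)}

lemma applyHom_mk {g : Γ} {f : Fin (ar g) → Tree ar} :
    applyHom H ⟨g, f⟩ = subst (fun i => applyHom H (f i)) (H g) := rfl

variable (H) in
/-- A position `v` of `applyHom H s` lies in the copy of `H g` created by the node
`origin H s v` of `s`, labelled `g`, at the position `offset H s v` of `H g`. -/
def origin : Tree ar → List ℕ → List ℕ
  | ⟨g, f⟩, v => match firstVar (H g) v with
    | none => []
    | some (c, v') => (c : ℕ) :: origin (f c) v'

variable (H) in
def offset : Tree ar → List ℕ → List ℕ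
  | ⟨g, f⟩, v => match firstVar (H g) v with
    | none => v
    | some (c, v') => offset (f c) v'

section OriginEquations

variable {g : Γ} {f : Fin (ar g) → Tree ar} {v v' : List ℕ}

lemma origin_of_firstVar_eq_none (hfv : firstVar (H g) v = none) : origin H ⟨g, f⟩ v = [] := by
  rw [origin, hfv]

lemma offset_of_firstVar_eq_none (hfv : firstVar (H g) v = none) : offset H ⟨g, f⟩ v = v := by
  rw [offset, hfv]

lemma origin_of_firstVar_eq_some {c : Fin (ar g)} (hfv : firstVar (H g) v = some (c, v')) :
    origin H ⟨g, f⟩ v = (c : ℕ) :: origin H (f c) v' := by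
  rw [origin, hfv]

lemma offset_of_firstVar_eq_some {c : Fin (ar g)} (hfv : firstVar (H g) v = some (c, v')) :
    offset H ⟨g, f⟩ v = offset H (f c) v' := by
  rw [offset, hfv]

end OriginEquations

lemma exists_origin_offset {s : Tree ar} {v : List ℕ} (hv : inPos (applyHom H s) v) :
    ∃ g f, inPos s (origin H s v) ∧ subtree s (origin H s v) = ⟨g, f⟩ ∧
      inPos (H g) (offset H s v) ∧ (∃ δ, root (subtree (H g) (offset H s v)) = Sum.inl δ) ∧
      subtree (applyHom H s) v =
        subst (fun i => applyHom H (f i)) (subtree (H g) (offset H s v)) := by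
  induction s generalizing v with
  | mk g f ih =>
    rcases hfv : firstVar (H g) v with - | ⟨c, v'⟩
    · rw [origin_of_firstVar_eq_none hfv, offset_of_firstVar_eq_none hfv]
      obtain ⟨h1, h2⟩ := firstVar_eq_none hv hfv
      exact ⟨g, f, inPos_nil _, subtree_nil _, h1, h2, subtree_subst h1⟩
    · rw [origin_of_firstVar_eq_some hfv, offset_of_firstVar_eq_some hfv]
      obtain ⟨q, hq, rfl⟩ := firstVar_eq_some hfv
      obtain ⟨g', f', h1, h2, h3, h4, h5⟩ := ih c (hq.inPos_subst_append_iff.1 hv)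
      refine ⟨g', f', (inPos_cons_fin c).2 h1, by rwa [subtree_cons_fin], h3, h4, ?_⟩
      rw [applyHom_mk, hq.subtree_subst_append]
      exact h5

lemma origin_mono (s : Tree ar) {v w : List ℕ} (hvw : v <+: w) :
    origin H s v <+: origin H s w := by
  obtain ⟨e, rfl⟩ := hvw
  induction s generalizing v with
  | mk g f ih =>
    rcases hfv : firstVar (H g) v with - | ⟨c, v'⟩
    · rw [origin_of_firstVar_eq_none hfv]
      exact List.nil_prefix
    · rw [origin_of_firstVar_eq_some hfv, origin_of_firstVar_eq_some (firstVar_append hfv e)]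
      exact (List.prefix_cons_inj _).2 (ih c (v := v'))

lemma offset_append_of_origin_eq {s : Tree ar} {v e : List ℕ}
    (h : origin H s (v ++ e) = origin H s v) : offset H s (v ++ e) = offset H s v ++ e := by
  induction s generalizing v with
  | mk g f ih =>
    rcases hfv : firstVar (H g) v with - | ⟨c, v'⟩
    · rw [offset_of_firstVar_eq_none hfv]
      rcases hfv' : firstVar (H g) (v ++ e) with - | ⟨c', v''⟩
      · exact offset_of_firstVar_eq_none hfv'
      · rw [origin_of_firstVar_eq_none hfv, origin_of_firstVar_eq_some hfv'] at h
        cases h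
    · have hfv' := firstVar_append hfv e
      rw [origin_of_firstVar_eq_some hfv, origin_of_firstVar_eq_some hfv'] at h
      rw [offset_of_firstVar_eq_some hfv, offset_of_firstVar_eq_some hfv']
      exact ih c (List.cons_injective h)

variable (vps : ∀ g : Γ, Fin (ar g) → List ℕ)

/-- The image of a position of `s` in `applyHom H s`, when the `i`-th subtree of a node labelled
`g` is reached through the occurrence `vps g i` of `x_i` in `H g`. -/
def imagePos : Tree ar → List ℕ → List ℕ
  | _, [] => []
  | ⟨g, f⟩, i :: p => if h : i < ar g then vps g ⟨i, h⟩ ++ imagePos (f ⟨i, h⟩) p else []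

@[simp] lemma imagePos_nil (s : Tree ar) : imagePos vps s [] = [] := by
  cases s; rfl

lemma imagePos_cons_fin {g : Γ} {f : Fin (ar g) → Tree ar} (c : Fin (ar g)) (p : List ℕ) :
    imagePos vps ⟨g, f⟩ ((c : ℕ) :: p) = vps g c ++ imagePos vps (f c) p := by
  simp [imagePos, c.isLt]

lemma imagePos_append {s : Tree ar} {p : List ℕ} (hp : inPos s p) (q : List ℕ) :
    imagePos vps s (p ++ q) = imagePos vps s p ++ imagePos vps (subtree s p) q := by
  induction p generalizing s with
  | nil => simp
  | cons i p ih =>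
    obtain ⟨g, f⟩ := s
    obtain ⟨hi, hp⟩ := hp
    have := imagePos_cons_fin vps (f := f) ⟨i, hi⟩
    simp only [List.cons_append] at this ⊢
    rw [this, this, ih hp, subtree_cons hi, List.append_assoc]

lemma imagePos_append_singleton {s : Tree ar} {p : List ℕ} (hp : inPos s p) {g : Γ}
    {f : Fin (ar g) → Tree ar} (hs : subtree s p = ⟨g, f⟩) (d : Fin (ar g)) :
    imagePos vps s (p ++ [(d : ℕ)]) = imagePos vps s p ++ vps g d := by
  rw [imagePos_append vps hp, hs, imagePos_cons_fin, imagePos_nil, List.append_nil]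

lemma imagePos_prefix {s : Tree ar} {p p' : List ℕ} (hp' : inPos s p') (h : p <+: p') :
    imagePos vps s p <+: imagePos vps s p' := by
  obtain ⟨e, rfl⟩ := h
  rw [imagePos_append vps (inPos_append.1 hp').1]
  exact List.prefix_append _ _

variable {vps}

lemma inPos_imagePos (hvps : ∀ g i, IsVarPos (H g) (vps g i) i) {s : Tree ar} {p : List ℕ}
    (hp : inPos s p) : inPos (applyHom H s) (imagePos vps s p) := by
  induction p generalizing s with
  | nil => rw [imagePos_nil]; exact inPos_nil _
  | cons i p ih =>
    obtain ⟨g, f⟩ := s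
    obtain ⟨hi, hp⟩ := hp
    have hc := imagePos_cons_fin vps (f := f) ⟨i, hi⟩ p
    simp only at hc
    rw [hc, applyHom_mk, (hvps g ⟨i, hi⟩).inPos_subst_append_iff]
    exact ih hp

lemma subtree_imagePos (hvps : ∀ g i, IsVarPos (H g) (vps g i) i) {s : Tree ar} {p : List ℕ}
    (hp : inPos s p) : subtree (applyHom H s) (imagePos vps s p) = applyHom H (subtree s p) := by
  induction p generalizing s with
  | nil => simp
  | cons i p ih =>
    obtain ⟨g, f⟩ := s
    obtain ⟨hi, hp⟩ := hp
    have hc := imagePos_cons_fin vps (f := f) ⟨i, hi⟩ p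
    simp only at hc
    rw [hc, applyHom_mk, subtree_cons hi, (hvps g ⟨i, hi⟩).subtree_subst_append]
    exact ih hp

end Homomorphisms

lemma pow_le_of_pow_succ_sub_le_mul {ℓ k m : ℕ} (h : ℓ ^ (k + 2) - (ℓ - 1) ≤ (ℓ - 1) * m) :
    ℓ ^ (k + 1) ≤ m := by
  rcases Nat.eq_zero_or_pos ℓ with rfl | hl
  · simp
  obtain ⟨L, rfl⟩ : ∃ L, ℓ = L + 1 := ⟨ℓ - 1, by omega⟩
  set X := (L + 1) ^ (k + 1)
  have hX : 1 ≤ X := Nat.one_le_pow _ _ (by omega)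
  rw [pow_succ, Nat.add_sub_cancel, show X * (L + 1) = L * X + X by ring] at h
  by_contra! hm
  have := Nat.mul_le_mul_left L (Nat.succ_le_of_lt hm)
  rw [Nat.mul_succ] at this
  omega

section LinearTransfer

variable {ψ : ∀ g : Γ, TreeX arΔ (ar g)} {ℓ k : ℕ}

lemma card_filter_firstVar_eq_none_le {r : ℕ} {h : TreeX arΔ r} {u : Fin r → Tree arΔ}
    (hht : height h < ℓ) {C : Finset (List ℕ)} (hch : IsChain (· <+: ·) (C : Set (List ℕ)))
    (hmem : ∀ v ∈ C, inPos (subst u h) v ∧ 1 ≤ arΔ (root (subtree (subst u h) v))) :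
    #(C.filter (firstVar h · = none)) ≤ ℓ - 1 := by
  refine card_le_of_isChain_of_length_lt (hch.mono (coe_subset.2 (filter_subset _ _)))
    fun v hv => ?_
  obtain ⟨hvC, hn⟩ := mem_filter.1 hv
  obtain ⟨hpos, har⟩ := hmem v hvC
  obtain ⟨hv, δ, hr⟩ := firstVar_eq_none hpos hn
  rw [subtree_subst hv, root_subst_of_root_eq_inl hr] at har
  have := length_lt_height hv (by rw [hr]; exact har)
  omega

lemma IsVarPos.prefix_of_firstVar_ne_none {r : ℕ} {h : TreeX arΔ r} {Q v w : List ℕ}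
    {c : Fin r} (hQ : IsVarPos h Q c) (hQw : Q <+: w) (hvw : v <+: w ∨ w <+: v)
    (hv : firstVar h v ≠ none) : Q <+: v := by
  obtain ⟨⟨c', r'⟩, hfv⟩ := Option.ne_none_iff_exists'.1 hv
  obtain ⟨Qv, hQv, rfl⟩ := firstVar_eq_some hfv
  rcases hvw with hle | hle
  · rw [← (hQv.eq_of_prefix_of_prefix hQ ((List.prefix_append _ _).trans hle) hQw).1]
    exact List.prefix_append _ _
  · exact hQw.trans hle

lemma exists_isVarPos_hasChainFrom {r : ℕ} {h : TreeX arΔ r} {u : Fin r → Tree arΔ} {δ : Δ}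
    {P : Tree arΔ → Prop} {M a : ℕ} (hroot : root h = Sum.inl δ) (hht : height h < ℓ)
    (hP : ∀ t, P t → 1 ≤ arΔ (root t)) (hM : ℓ ≤ M) (hC : HasChainFrom P M (subst u h) [a]) :
    ∃ c Q, IsVarPos h (a :: Q) c ∧ HasChainFrom P (M - (ℓ - 1)) (u c) [] := by
  obtain ⟨C, -, hMC, hch, hmem⟩ := hC
  set Cout := C.filter (fun v => ¬ firstVar h v = none)
  have hout : M - (ℓ - 1) ≤ #Cout := by
    have := card_filter_add_card_filter_not (s := C) (fun v => firstVar h v = none)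
    have := card_filter_firstVar_eq_none_le hht hch fun v hv =>
      ⟨(hmem v hv).2.1, hP _ (hmem v hv).2.2⟩
    dsimp only [Cout]
    omega
  obtain ⟨v₀, hv₀⟩ : Cout.Nonempty := card_pos.1 (by omega)
  obtain ⟨hv₀C, hv₀s⟩ := mem_filter.1 hv₀
  obtain ⟨⟨c, r₀⟩, hfv₀⟩ := Option.ne_none_iff_exists'.1 hv₀s
  obtain ⟨Q, hQ, rfl⟩ := firstVar_eq_some hfv₀
  obtain ⟨a', Q', rfl⟩ := List.exists_cons_of_ne_nil (l := Q) fun hQnil => by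
    have := hQ.2
    rw [hQnil, subtree_nil, hroot] at this
    cases this
  obtain ⟨rfl, -⟩ := List.cons_prefix_cons.1 (hmem _ hv₀C).1
  have hext : ∀ v ∈ Cout, a :: Q' ++ [] <+: v := fun v hv => by
    simpa using hQ.prefix_of_firstVar_ne_none (List.prefix_append _ _)
      (IsChain.total hch (mem_filter.1 hv).1 hv₀C) (mem_filter.1 hv).2
  have hchain : HasChainFrom P #Cout (subst u h) (a :: Q' ++ []) :=
    ⟨Cout, ⟨_, hv₀⟩, le_rfl, hch.mono (coe_subset.2 (filter_subset _ _)), fun v hv =>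
      ⟨hext v hv, (hmem v (mem_filter.1 hv).1).2⟩⟩
  rw [← hasChainFrom_subtree_iff (inPos_subst hQ.1), subtree_subst hQ.1,
    subst_of_root_eq_inr hQ.2] at hchain
  exact ⟨c, Q', hQ, hchain.mono (fun _ => id) hout (List.prefix_refl _)⟩

lemma card_filter_origin_eq_le (hht : ∀ g, height (ψ g) < ℓ) {s : Tree ar}
    {C : Finset (List ℕ)} (hch : IsChain (· <+: ·) (C : Set (List ℕ)))
    (hmem : ∀ v ∈ C, inPos (applyHom ψ s) v ∧ 1 ≤ arΔ (root (subtree (applyHom ψ s) v)))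
    (p : List ℕ) : #(C.filter (origin ψ s · = p)) ≤ ℓ - 1 := by
  have key : ∀ v ∈ C.filter (origin ψ s · = p), ∀ w ∈ C.filter (origin ψ s · = p), v <+: w →
      (offset ψ s v).length = (offset ψ s w).length → v = w := by
    rintro v hv _ hw ⟨e, rfl⟩ hlen
    rw [offset_append_of_origin_eq ((mem_filter.1 hw).2.trans (mem_filter.1 hv).2.symm),
      List.length_append] at hlen
    rw [List.eq_nil_of_length_eq_zero (by omega : e.length = 0), List.append_nil]
  simpa using card_le_card_of_injOn (fun v => (offset ψ s v).length) (t := range (ℓ - 1))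
    (fun v hv => by
      obtain ⟨hv, har⟩ := hmem v (mem_filter.1 hv).1
      obtain ⟨g, f, -, -, hq, ⟨δ, hδ⟩, hsub⟩ := exists_origin_offset hv
      rw [hsub, root_subst_of_root_eq_inl hδ] at har
      have := length_lt_height hq (by rw [hδ]; exact har)
      have := hht g
      simp only [coe_range, Set.mem_Iio]
      omega)
    fun v hv w hw hlen => (IsChain.total hch (mem_filter.1 hv).1 (mem_filter.1 hw).1).elim
      (key v hv w hw · hlen) fun h => (key w hw v hv h hlen.symm).symm

/-- The two chains below `v` can keep fewer than `ℓ` of their nodes inside the copy of `ψ g`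
containing `v`, so both leave it through variables, which are distinct by linearity. -/
lemma isSPRoot_origin_of_pullback (hψ : Linear ψ) (hht : ∀ g, height (ψ g) < ℓ)
    (hpull : ∀ s : Tree ar, HasChainFrom (IsSPRoot ℓ k) (ℓ ^ (k + 1) - (ℓ - 1)) (applyHom ψ s) [] →
      HasSPChain ℓ k s [])
    {s : Tree ar} {v : List ℕ} (hv : inPos (applyHom ψ s) v)
    (hSP : IsSPRoot ℓ (k + 1) (subtree (applyHom ψ s) v)) :
    inPos s (origin ψ s v) ∧ IsSPRoot ℓ k (subtree s (origin ψ s v)) := by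
  obtain ⟨g, f, ho, hs, hq, ⟨δ, hδ⟩, hsub⟩ := exists_origin_offset hv
  obtain ⟨i, j, hb, hi, hj⟩ := hSP
  rw [hsub] at hb hi hj
  refine ⟨ho, ?_⟩
  rw [hs]
  have side : ∀ a, HasSPChain ℓ (k + 1)
      (subst (fun i => applyHom ψ (f i)) (subtree (ψ g) (offset ψ s v))) [a] →
      ∃ c Q, IsVarPos (subtree (ψ g) (offset ψ s v)) (a :: Q) c ∧
        HasSPChain ℓ k ⟨g, f⟩ [(c : ℕ)] := by
    intro a ha
    obtain ⟨c, Q, hQ, hC⟩ := exists_isVarPos_hasChainFrom hδ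
      ((height_subtree_le hq).trans_lt (hht g)) (fun _ h => one_le_two.trans (IsSPRoot.two_le_ar h))
      (Nat.le_self_pow (Nat.succ_ne_zero k) ℓ) ha
    refine ⟨c, Q, hQ, ?_⟩
    have := hpull (f c) hC
    rwa [← subtree_singleton (f := f) c,
      hasSPChain_subtree_iff ((inPos_cons_fin c).2 (inPos_nil _)), List.append_nil] at this
  obtain ⟨ci, Qi, hQi, hci⟩ := side i hi
  obtain ⟨cj, Qj, hQj, hcj⟩ := side j hj
  have hne : ci ≠ cj := by
    rintro rfl
    exact hb.2.2.2 (List.cons.inj (hQi.eq_of_varCount_le_one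
      ((varCount_subtree_le hq ci).trans (hψ g ci)) hQj)).1
  exact ⟨ci, cj, isBranching_mk hne, hci, hcj⟩

lemma hasChainFrom_origin (hht : ∀ g, height (ψ g) < ℓ)
    (hA : ∀ (s : Tree ar) v, inPos (applyHom ψ s) v →
      IsSPRoot ℓ (k + 1) (subtree (applyHom ψ s) v) →
        inPos s (origin ψ s v) ∧ IsSPRoot ℓ k (subtree s (origin ψ s v)))
    {s : Tree ar} {y : List ℕ} {M : ℕ}
    (h : HasChainFrom (IsSPRoot ℓ (k + 1)) M (applyHom ψ s) y) :
    ∃ m, M ≤ (ℓ - 1) * m ∧ HasChainFrom (IsSPRoot ℓ k) m s (origin ψ s y) := by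
  obtain ⟨C, hne, hM, hch, hmem⟩ := h
  refine ⟨#(C.image (origin ψ s)), hM.trans (card_le_mul_card_image C _ fun p _ =>
      card_filter_origin_eq_le hht hch (fun v hv =>
        ⟨(hmem v hv).2.1, one_le_two.trans (hmem v hv).2.2.two_le_ar⟩) p),
    C.image (origin ψ s), hne.image _, le_rfl, ?_, ?_⟩
  · rw [coe_image]
    exact hch.image_of_map_rel _ _ _ fun _ _ h => origin_mono s h
  · simp only [mem_image, forall_exists_index, and_imp]
    rintro _ v hv rfl
    exact ⟨origin_mono s (hmem v hv).1, hA s v (hmem v hv).2.1 (hmem v hv).2.2⟩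

lemma hasSPChain_of_hasChainFrom_applyHom (hψ : Linear ψ) (hht : ∀ g, height (ψ g) < ℓ) :
    ∀ k (s : Tree ar), HasChainFrom (IsSPRoot ℓ k) (ℓ ^ (k + 1) - (ℓ - 1)) (applyHom ψ s) [] →
      HasSPChain ℓ k s []
  | 0, _, _ => trivial
  | k + 1, _, h => by
    obtain ⟨m, hm, hC⟩ := hasChainFrom_origin hht (fun _ _ => isSPRoot_origin_of_pullback hψ hht
      (hasSPChain_of_hasChainFrom_applyHom hψ hht k)) h
    exact hC.mono (fun _ => id) (pow_le_of_pow_succ_sub_le_mul hm) List.nil_prefix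

lemma isSPRoot_origin (hψ : Linear ψ) (hht : ∀ g, height (ψ g) < ℓ) {s : Tree ar}
    {v : List ℕ} (hv : inPos (applyHom ψ s) v)
    (hSP : IsSPRoot ℓ (k + 1) (subtree (applyHom ψ s) v)) :
    inPos s (origin ψ s v) ∧ IsSPRoot ℓ k (subtree s (origin ψ s v)) :=
  isSPRoot_origin_of_pullback hψ hht (hasSPChain_of_hasChainFrom_applyHom hψ hht k) hv hSP

end LinearTransfer

section CompleteTransfer

variable {φ : ∀ g : Γ, TreeX arΔ (ar g)} {vps : ∀ g : Γ, Fin (ar g) → List ℕ} {ℓ k : ℕ}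

/-- The witness is the fork of the occurrences `vps g d` and `vps g e` in the copy of `φ g`
placed at `imagePos vps s p`, where `g` labels the node `p` of `s`. -/
lemma exists_isSPRoot_of_fork (hvps : ∀ g i, IsVarPos (φ g) (vps g i) i) {s : Tree ar}
    {p : List ℕ} (hp : inPos s p) {d e : ℕ} (hde : d ≠ e) (hd : d < ar (root (subtree s p)))
    (he : e < ar (root (subtree s p)))
    (hcd : HasSPChain ℓ k (applyHom φ s) (imagePos vps s (p ++ [d])))
    (hce : HasSPChain ℓ k (applyHom φ s) (imagePos vps s (p ++ [e]))) :
    ∃ v a, imagePos vps s p <+: v ∧ v ++ [a] <+: imagePos vps s (p ++ [d]) ∧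
      inPos (applyHom φ s) v ∧ IsSPRoot ℓ k (subtree (applyHom φ s) v) := by
  generalize hs : subtree s p = t at hd he
  obtain ⟨g, f⟩ := t
  have hD := imagePos_append_singleton vps hp hs ⟨d, hd⟩
  have hE := imagePos_append_singleton vps hp hs ⟨e, he⟩
  simp only at hD hE
  rw [hD] at hcd ⊢
  rw [hE] at hce
  obtain ⟨c, a, b, δ, hab, ha, hb, hc, hδ, haδ, hbδ⟩ :=
    exists_fork_of_isVarPos (hvps g ⟨d, hd⟩) (hvps g ⟨e, he⟩) fun h => hde (congrArg Fin.val h)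
  set x := imagePos vps s p
  have hx : inPos (applyHom φ s) x := inPos_imagePos hvps hp
  have hsubx : subtree (applyHom φ s) x = subst (fun i => applyHom φ (f i)) (φ g) := by
    rw [subtree_imagePos hvps hp, hs, applyHom_mk]
  have hxc : inPos (applyHom φ s) (x ++ c) :=
    inPos_append.2 ⟨hx, by rw [hsubx]; exact inPos_subst hc⟩
  have hr : root (subtree (applyHom φ s) (x ++ c)) = δ := by
    rw [subtree_append hx, hsubx, subtree_subst hc, root_subst_of_root_eq_inl hδ]
  have hfork : ∀ {y a}, c ++ [a] <+: y → x ++ c ++ [a] <+: x ++ y := fun h => by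
    rw [List.append_assoc]
    exact (List.prefix_append_right_inj x).2 h
  refine ⟨x ++ c, a, List.prefix_append _ _, hfork ha, hxc, a, b,
    ⟨by rw [hr]; omega, by rw [hr]; exact haδ, by rw [hr]; exact hbδ, hab⟩, ?_, ?_⟩
  · exact (hasSPChain_subtree_iff hxc).2 (hcd.of_prefix (hfork ha))
  · exact (hasSPChain_subtree_iff hxc).2 (hce.of_prefix (hfork hb))

lemma exists_isSPRoot_between (hvps : ∀ g i, IsVarPos (φ g) (vps g i) i)
    (hcc : ∀ (s : Tree ar) y, HasSPChain ℓ k s y →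
      HasSPChain ℓ k (applyHom φ s) (imagePos vps s y))
    {s : Tree ar} {p : List ℕ} (hp : inPos s p) (hSP : IsSPRoot ℓ k (subtree s p)) {d : ℕ}
    (hd : d < ar (root (subtree s p)))
    (hcd : HasSPChain ℓ k (applyHom φ s) (imagePos vps s (p ++ [d]))) :
    ∃ v a, imagePos vps s p <+: v ∧ v ++ [a] <+: imagePos vps s (p ++ [d]) ∧
      inPos (applyHom φ s) v ∧ IsSPRoot ℓ k (subtree (applyHom φ s) v) := by
  obtain ⟨i, j, hb, hi, hj⟩ := hSP
  obtain ⟨e, hed, he, hce⟩ : ∃ e, e ≠ d ∧ e < ar (root (subtree s p)) ∧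
      HasSPChain ℓ k (subtree s p) [e] := by
    by_cases hid : i = d
    · exact ⟨j, fun h => hb.2.2.2 (hid.trans h.symm), hb.2.2.1, hj⟩
    · exact ⟨i, hid, hb.2.1, hi⟩
  exact exists_isSPRoot_of_fork hvps hp (Ne.symm hed) hd he hcd
    (hcc s _ ((hasSPChain_subtree_iff hp).1 hce))

lemma exists_isSPRoot_above_imagePos (hvps : ∀ g i, IsVarPos (φ g) (vps g i) i)
    (hcc : ∀ (s : Tree ar) y, HasSPChain ℓ k s y →
      HasSPChain ℓ k (applyHom φ s) (imagePos vps s y))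
    {s : Tree ar} {p : List ℕ} (hp : inPos s p) (hSP : IsSPRoot ℓ k (subtree s p)) :
    ∃ v, imagePos vps s p <+: v ∧ inPos (applyHom φ s) v ∧
      IsSPRoot ℓ k (subtree (applyHom φ s) v) := by
  obtain ⟨i, j, hb, hi, hj⟩ := hSP
  obtain ⟨v, -, h1, -, h2, h3⟩ := exists_isSPRoot_between hvps hcc hp ⟨i, j, hb, hi, hj⟩
    hb.2.1 (hcc s _ ((hasSPChain_subtree_iff hp).1 hi))
  exact ⟨v, h1, h2, h3⟩

lemma exists_isSPRoot_toward (hvps : ∀ g i, IsVarPos (φ g) (vps g i) i)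
    (hcc : ∀ (s : Tree ar) y, HasSPChain ℓ k s y →
      HasSPChain ℓ k (applyHom φ s) (imagePos vps s y))
    {s : Tree ar} {p z v : List ℕ} (hp : inPos s p) (hSP : IsSPRoot ℓ k (subtree s p))
    (hz : inPos s z) (hpz : p <+: z) (hne : p ≠ z) (hzv : imagePos vps s z <+: v)
    (hv : inPos (applyHom φ s) v) (hvSP : IsSPRoot ℓ k (subtree (applyHom φ s) v)) :
    ∃ w, imagePos vps s p <+: w ∧ inPos (applyHom φ s) w ∧
      IsSPRoot ℓ k (subtree (applyHom φ s) w) ∧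
      ∃ d a, p ++ [d] <+: z ∧ w ++ [a] <+: imagePos vps s (p ++ [d]) := by
  obtain ⟨_ | ⟨d, rest⟩, hrest⟩ := hpz
  · exact absurd (by simpa using hrest) hne
  have hpd : p ++ [d] <+: z := ⟨rest, by simpa using hrest⟩
  obtain ⟨w, a, h1, h2, h3, h4⟩ := exists_isSPRoot_between hvps hcc hp hSP
    (inPos_singleton.1 (inPos_append.1 (inPos_of_prefix hpd hz)).2)
    ((hasSPChain_of_isSPRoot hv hvSP).of_prefix ((imagePos_prefix vps hz hpd).trans hzv))
  exact ⟨w, h1, h3, h4, d, a, hpd, h2⟩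

lemma hasChainFrom_imagePos (hvps : ∀ g i, IsVarPos (φ g) (vps g i) i)
    (hcc : ∀ (s : Tree ar) y, HasSPChain ℓ k s y →
      HasSPChain ℓ k (applyHom φ s) (imagePos vps s y))
    {s : Tree ar} {y : List ℕ} {M : ℕ} (h : HasChainFrom (IsSPRoot ℓ k) M s y) :
    HasChainFrom (IsSPRoot ℓ k) M (applyHom φ s) (imagePos vps s y) := by
  classical
  obtain ⟨C, hne, hM, hch, hmem⟩ := h
  obtain ⟨z, hz, htop⟩ := IsChain.exists_top hch hne
  have hzpos := (hmem z hz).2.1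
  obtain ⟨vz, hvz, hvzpos, hvzSP⟩ := exists_isSPRoot_above_imagePos hvps hcc hzpos (hmem z hz).2.2
  -- at each `p ∈ C` below the top `z`, branch off towards `z`: the images then increase strictly
  have himage : ∀ p, ∃ v, p ∈ C → imagePos vps s p <+: v ∧ inPos (applyHom φ s) v ∧
      IsSPRoot ℓ k (subtree (applyHom φ s) v) ∧
      (p ≠ z → ∃ d a, p ++ [d] <+: z ∧ v ++ [a] <+: imagePos vps s (p ++ [d])) := by
    intro p
    by_cases hp : p ∈ C
    · by_cases hpz : p = z
      · exact ⟨vz, fun _ => ⟨hpz ▸ hvz, hvzpos, hvzSP, fun h => absurd hpz h⟩⟩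
      obtain ⟨w, h1, h2, h3, h4⟩ := exists_isSPRoot_toward hvps hcc (hmem p hp).2.1
        (hmem p hp).2.2 hzpos (htop p hp) hpz hvz hvzpos hvzSP
      exact ⟨w, fun _ => ⟨h1, h2, h3, fun _ => h4⟩⟩
    · exact ⟨[], fun h => absurd h hp⟩
  choose F hF using himage
  obtain ⟨hFch, hFinj⟩ := isChain_image_and_injOn hch <| strictMono_of_branch_toward_top htop
    (fun hqz hpq => imagePos_prefix vps (inPos_of_prefix hqz hzpos) hpq)
    (fun p hp => (hF p hp).1) fun p hp => (hF p hp).2.2.2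
  refine ⟨C.image F, hne.image F, by rwa [card_image_of_injOn hFinj], by rwa [coe_image], ?_⟩
  simp only [mem_image, forall_exists_index, and_imp]
  rintro _ p hp rfl
  obtain ⟨h1, h2, h3, -⟩ := hF p hp
  exact ⟨(imagePos_prefix vps (hmem p hp).2.1 (hmem p hp).1).trans h1, h2, h3⟩

lemma hasSPChain_imagePos (hvps : ∀ g i, IsVarPos (φ g) (vps g i) i) :
    ∀ k (s : Tree ar) y, HasSPChain ℓ k s y → HasSPChain ℓ k (applyHom φ s) (imagePos vps s y)
  | 0, _, _, _ => trivial
  | k + 1, _, _, h => hasChainFrom_imagePos hvps (hasSPChain_imagePos hvps k) h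

end CompleteTransfer

lemma SP_nonempty_applyHom {Δ' : Type} {arΔ' : Δ' → ℕ} {ψ : ∀ g : Γ, TreeX arΔ (ar g)}
    {φ : ∀ g : Γ, TreeX arΔ' (ar g)} {ℓ k : ℕ} (hψ : Linear ψ) (hφ : Complete φ)
    (hht : ∀ g, height (ψ g) < ℓ) {s : Tree ar} (h : (SP ℓ (k + 1) (applyHom ψ s)).Nonempty) :
    (SP ℓ k (applyHom φ s)).Nonempty := by
  obtain ⟨v, hv⟩ := h
  obtain ⟨hv, hvSP⟩ := mem_SP_iff.1 hv
  obtain ⟨hp, hpSP⟩ := isSPRoot_origin hψ hht hv hvSP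
  choose vps hvps using fun g i => exists_isVarPos_of_one_le_varCount (hφ g i)
  obtain ⟨w, -, hw, hwSP⟩ :=
    exists_isSPRoot_above_imagePos hvps (hasSPChain_imagePos hvps k) hp hpSP
  exact ⟨w, mem_SP_iff.2 ⟨hw, hwSP⟩⟩

theorem SP_nonempty_of_bimorphism_chain_general (n : ℕ)
    (Γ : Fin n → Type) (arΓ : ∀ i, Γ i → ℕ)
    (Δ : Fin (n + 1) → Type) (arΔ : ∀ j, Δ j → ℕ)
    (ψ : ∀ i : Fin n, ∀ g : Γ i, TreeX (arΔ i.castSucc) (arΓ i g))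
    (φ : ∀ i : Fin n, ∀ g : Γ i, TreeX (arΔ i.succ) (arΓ i g))
    (hψ : ∀ i, Linear (ψ i)) (hφ : ∀ i, Complete (φ i))
    (K : ∀ i : Fin n, Set (Tree (arΓ i)))
    (ℓ : ℕ) (hℓ : ∀ (i : Fin n) (γ : Γ i), height (ψ i γ) < ℓ)
    (t : Tree (arΔ 0)) (u : Tree (arΔ (Fin.last n)))
    (hrel : ∃ w : ∀ j : Fin (n + 1), Tree (arΔ j),
        w 0 = t ∧ w (Fin.last n) = u ∧
        ∀ i : Fin n, ∃ s ∈ K i,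
          applyHom (ψ i) s = w i.castSucc ∧ applyHom (φ i) s = w i.succ)
    (hSP : (SP ℓ (n + 1) t).Nonempty) :
    (SP ℓ 1 u).Nonempty := by
  obtain ⟨w, rfl, rfl, hw⟩ := hrel
  have hstage : ∀ j : Fin (n + 1), (SP ℓ (n + 1 - j) (w j)).Nonempty := by
    intro j
    induction j using Fin.induction with
    | zero => simpa using hSP
    | succ i ih =>
      obtain ⟨s, -, hψs, hφs⟩ := hw i
      rw [← hψs, Fin.val_castSucc, show n + 1 - (i : ℕ) = n - i + 1 by omega] at ih
      rw [← hφs, Fin.val_succ, show n + 1 - (i + 1) = n - i by omega]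
      exact SP_nonempty_applyHom (hψ i) (hφ i) (hℓ i) ih
  simpa using hstage (Fin.last n)

/-- a chain of `n` bimorphism-type relations `B_i = {(ψ̂_i s, φ̂_i s) | s ∈ K_i}`
with linear `ψ_i` and complete `φ_i`, where `ℓ > height(ψ_i(γ))` for all `i` and `γ`:
if `(t, u)` is in the composition `B_1 ; ⋯ ; B_n` and `SP^ℓ_{n+1}(t) ≠ ∅`, then
`SP^ℓ_1(u) ≠ ∅`. -/
theorem SP_nonempty_of_bimorphism_chain (n : ℕ) (hn : 1 ≤ n)
    (Γ : Fin n → Type) (arΓ : ∀ i, Γ i → ℕ)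
    (Δ : Fin (n + 1) → Type) (arΔ : ∀ j, Δ j → ℕ)
    (ψ : ∀ i : Fin n, ∀ g : Γ i, TreeX (arΔ i.castSucc) (arΓ i g))
    (φ : ∀ i : Fin n, ∀ g : Γ i, TreeX (arΔ i.succ) (arΓ i g))
    (hψ : ∀ i, Linear (ψ i)) (hφ : ∀ i, Complete (φ i))
    (K : ∀ i : Fin n, Set (Tree (arΓ i)))
    (ℓ : ℕ) (hℓ : ∀ (i : Fin n) (γ : Γ i), height (ψ i γ) < ℓ)
    (t : Tree (arΔ 0)) (u : Tree (arΔ (Fin.last n)))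
    (hrel : ∃ w : ∀ j : Fin (n + 1), Tree (arΔ j),
        w 0 = t ∧ w (Fin.last n) = u ∧
        ∀ i : Fin n, ∃ s ∈ K i,
          applyHom (ψ i) s = w i.castSucc ∧ applyHom (φ i) s = w i.succ)
    (hSP : (SP ℓ (n + 1) t).Nonempty) :
    (SP ℓ 1 u).Nonempty :=
  SP_nonempty_of_bimorphism_chain_general n Γ arΓ Δ arΔ ψ φ hψ hφ K ℓ hℓ t u hrel hSP

end Paper
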